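/- Let $E\subset\mathbb{R}^n$ be nonempty and $\alpha\in\mathbb{R}$ with $\operatorname{dist}(\cdot,E)^{-\alpha}\in A_1$. Then $0\le\alpha\le\Mu(E)$, where $\Mu(E)$ is the Muckenhoupt exponent of $E$. -/

import Mathlib

open MeasureTheory Metric Set

noncomputable section

/-- An axis-parallel half-open cube in `ℝⁿ`, given by its lower corner and side length. -/
structure Cube (n : ℕ) where
  a : EuclideanSpace ℝ (Fin n)
  l : ℝ
  pos : 0 < l

/-- The set of points of a cube. -/
def Cube.set {n : ℕ} (P : Cube n) : Set (EuclideanSpace ℝ (Fin n)) :=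
  {x | ∀ i, P.a i ≤ x i ∧ x i < P.a i + P.l}

/-- A weight: locally integrable and a.e. positive. -/
def IsWeight {n : ℕ} (w : EuclideanSpace ℝ (Fin n) → ℝ) : Prop :=
  LocallyIntegrable w volume ∧ ∀ᵐ x ∂(volume : Measure (EuclideanSpace ℝ (Fin n))), 0 < w x

/-- The `A₁` inequality with constant `C`, over all axis-parallel cubes. -/
def A1With {n : ℕ} (w : EuclideanSpace ℝ (Fin n) → ℝ) (C : ℝ) : Prop :=
  ∀ P : Cube n, (⨍ x in P.set, w x) ≤ C * essInf w (volume.restrict P.set)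

/-- Membership in the Muckenhoupt class `A₁`. -/
def MemA1 {n : ℕ} (w : EuclideanSpace ℝ (Fin n) → ℝ) : Prop :=
  IsWeight w ∧ ∃ C : ℝ, A1With w C

/-- The `A_p` inequality with constant `C`, over all axis-parallel cubes. -/
def ApWith {n : ℕ} (w : EuclideanSpace ℝ (Fin n) → ℝ) (p C : ℝ) : Prop :=
  ∀ P : Cube n,
    (⨍ x in P.set, w x) * (⨍ x in P.set, w x ^ (1 / (1 - p))) ^ (p - 1) ≤ C

/-- Membership in the Muckenhoupt class `A_p`. -/
def MemAp {n : ℕ} (w : EuclideanSpace ℝ (Fin n) → ℝ) (p : ℝ) : Prop :=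
  IsWeight w ∧ ∃ C : ℝ, ApWith w p C

/-- `Q` is a dyadic subcube of `P`. -/
def IsDyadicSubcube {n : ℕ} (P Q : Cube n) : Prop :=
  ∃ (j : ℕ) (k : Fin n → ℕ), (∀ i, k i < 2 ^ j) ∧
    Q.l = P.l / 2 ^ j ∧ ∀ i, Q.a i = P.a i + P.l * k i / 2 ^ j

/-- A cube is `E`-free if it does not meet `E`. -/
def EFree {n : ℕ} (E : Set (EuclideanSpace ℝ (Fin n))) (Q : Cube n) : Prop :=
  Q.set ∩ E = ∅

/-- The measure `|𝓜(P)|` of a largest `E`-free dyadic subcube of `P`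
(`0` if there is none). -/
def maxFree {n : ℕ} (E : Set (EuclideanSpace ℝ (Fin n))) (P : Cube n) : ℝ :=
  sSup {v : ℝ | ∃ Q : Cube n, IsDyadicSubcube P Q ∧ EFree E Q ∧ v = (volume Q.set).toReal}

/-- Weak porosity with constants `c`, `δ`. -/
def WeaklyPorousWith {n : ℕ} (E : Set (EuclideanSpace ℝ (Fin n))) (c δ : ℝ) : Prop :=
  ∀ P : Cube n, ∃ (N : ℕ) (Q : Fin N → Cube n),
    (∀ k, IsDyadicSubcube P (Q k) ∧ EFree E (Q k)) ∧
    (∀ k m, k ≠ m → Disjoint (Q k).set (Q m).set) ∧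
    (∀ k, δ * maxFree E P ≤ (volume (Q k).set).toReal) ∧
    c * (volume P.set).toReal ≤ ∑ k, (volume (Q k).set).toReal

/-- A set is weakly porous if it is weakly porous with some constants `0 < c, δ < 1`. -/
def WeaklyPorous {n : ℕ} (E : Set (EuclideanSpace ℝ (Fin n))) : Prop :=
  ∃ c δ : ℝ, 0 < c ∧ c < 1 ∧ 0 < δ ∧ δ < 1 ∧ WeaklyPorousWith E c δ

/-- Porosity. -/
def Porous {n : ℕ} (E : Set (EuclideanSpace ℝ (Fin n))) : Prop :=
  ∃ c : ℝ, 0 < c ∧ ∀ (x : EuclideanSpace ℝ (Fin n)) (r : ℝ), 0 < r →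
    ∃ y : EuclideanSpace ℝ (Fin n), ball y (c * r) ⊆ ball x r \ E

/-- The distance weight `dist(·,E)^{-α}`. -/
def distw {n : ℕ} (E : Set (EuclideanSpace ℝ (Fin n))) (α : ℝ)
    (x : EuclideanSpace ℝ (Fin n)) : ℝ :=
  infDist x E ^ (-α)

/-- `h_E(B(x,R))`: the supremum of radii `t` of balls contained in `B(x,R) \ E`. -/
def hFree {n : ℕ} (E : Set (EuclideanSpace ℝ (Fin n))) (x : EuclideanSpace ℝ (Fin n))
    (R : ℝ) : ℝ :=
  sSup {t : ℝ | ∃ y ∈ ball x R, ball y t ⊆ ball x R \ E}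

/-- The set of admissible exponents in the definition of the Muckenhoupt exponent. -/
def MuckSet {n : ℕ} (E : Set (EuclideanSpace ℝ (Fin n))) : Set ℝ :=
  {α : ℝ | ∃ C : ℝ, ∀ x ∈ E, ∀ R r : ℝ, 0 < r → r < hFree E x R → hFree E x R ≤ R →
    (volume (thickening r E ∩ ball x R)).toReal ≤
      C * (hFree E x R / r) ^ (-α) * (volume (ball x R)).toReal}

open scoped Classical in
/-- The Muckenhoupt exponent of `E`. -/
def MuckExp {n : ℕ} (E : Set (EuclideanSpace ℝ (Fin n))) : ℝ :=
  if ∀ x ∈ E, ∀ R : ℝ, 0 < R → 0 < hFree E x R then sSup (MuckSet E) else 0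

end

/-!
For `α < 0` the weight `dist(·, E)^(-α)` is continuous and vanishes on `E`, so its essential
infimum on a cube around a point of `E` is `0`, while its average there is positive.

For `α > 0`, a.e. positivity of the weight forces every ball to contain a ball missing `E`, so
`h_E > 0` everywhere, and testing the definition of the exponent on `B(x, r) ⊆ E_r ∩ B(x, R)` as
`r → 0` shows that every admissible exponent is at most `n`. To see that `α` is admissible, take
`x ∈ E` and `0 < r < h = h_E(B(x, R)) ≤ R`, and a ball of radius `> h/2` in `B(x, R) \ E`: on
its concentric half the weight is at most `(h/4)^(-α)`, while on `E_r` it is at least `r^(-α)`.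
The `A₁` inequality on the cube of side `2R` around `B(x, R)` turns this into
`|E_r ∩ B(x, R)| ≲ (h/r)^(-α) |B(x, R)|`.
-/

open Filter Topology

namespace Cube

variable {n : ℕ}

theorem set_eq_preimage (P : Cube n) :
    P.set = WithLp.ofLp ⁻¹' univ.pi fun i => Ico (P.a i) (P.a i + P.l) := by
  ext x; simp [Cube.set]

theorem measurableSet (P : Cube n) : MeasurableSet P.set := by
  rw [set_eq_preimage]
  exact (MeasurableSet.univ_pi fun _ => measurableSet_Ico).preimage (by fun_prop)

theorem volume_set (P : Cube n) : volume P.set = ENNReal.ofReal (P.l ^ n) := by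
  rw [set_eq_preimage, (PiLp.volume_preserving_ofLp (Fin n)).measure_preimage
    (MeasurableSet.univ_pi fun _ => measurableSet_Ico).nullMeasurableSet, Real.volume_pi_Ico]
  simp [ENNReal.ofReal_pow P.pos.le]

theorem volume_set_toReal (P : Cube n) : (volume P.set).toReal = P.l ^ n := by
  rw [volume_set, ENNReal.toReal_ofReal (pow_nonneg P.pos.le n)]

theorem volume_set_pos (P : Cube n) : 0 < volume P.set := by
  rw [volume_set]; exact ENNReal.ofReal_pos.2 (pow_pos P.pos n)

theorem volume_set_ne_top (P : Cube n) : volume P.set ≠ ⊤ := by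
  rw [volume_set]; exact ENNReal.ofReal_ne_top

theorem isBounded (P : Cube n) : Bornology.IsBounded P.set := by
  refine ((isCompact_univ_pi fun i => isCompact_Icc (a := P.a i) (b := P.a i + P.l)).image
    (PiLp.continuous_toLp 2 _)).isBounded.subset fun x hx => ⟨WithLp.ofLp x, ?_, rfl⟩
  exact fun i _ => Ico_subset_Icc_self (hx i)

def enclosing (x : EuclideanSpace ℝ (Fin n)) {R : ℝ} (hR : 0 < R) : Cube n :=
  ⟨WithLp.toLp 2 fun i => x i - R, 2 * R, by positivity⟩

theorem ball_subset_enclosing (x : EuclideanSpace ℝ (Fin n)) {R : ℝ} (hR : 0 < R) :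
    ball x R ⊆ (enclosing x hR).set := by
  intro z hz i
  have hzi := abs_lt.1 ((PiLp.dist_apply_le z x i).trans_lt hz)
  simp only [enclosing]
  constructor <;> linarith [hzi.1, hzi.2]

end Cube

section Volume

variable {n : ℕ}

theorem volume_ball_toReal (x : EuclideanSpace ℝ (Fin n)) {r : ℝ} (hr : 0 < r) :
    (volume (ball x r)).toReal =
      r ^ n * (volume (ball (0 : EuclideanSpace ℝ (Fin n)) 1)).toReal := by
  rw [Measure.addHaar_ball_of_pos volume x hr, ENNReal.toReal_mul,
    ENNReal.toReal_ofReal (by positivity), finrank_euclideanSpace_fin]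

theorem volume_enclosing_toReal (x : EuclideanSpace ℝ (Fin n)) {R : ℝ} (hR : 0 < R) :
    (volume (Cube.enclosing x hR).set).toReal = 2 ^ n /
      (volume (ball (0 : EuclideanSpace ℝ (Fin n)) 1)).toReal * (volume (ball x R)).toReal := by
  have hv : (volume (ball (0 : EuclideanSpace ℝ (Fin n)) 1)).toReal ≠ 0 :=
    (ENNReal.toReal_pos (measure_ball_pos volume _ one_pos).ne' measure_ball_lt_top.ne).ne'
  rw [Cube.volume_set_toReal, volume_ball_toReal x hR]
  simp only [Cube.enclosing]
  field_simp
  ring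

end Volume

section Weight

variable {n : ℕ} {w : EuclideanSpace ℝ (Fin n) → ℝ}

theorem IsWeight.integrableOn_cube (hw : IsWeight w) (P : Cube n) : IntegrableOn w P.set :=
  (hw.1.integrableOn_isCompact P.isBounded.isCompact_closure).mono_set subset_closure

theorem IsWeight.setAverage_pos (hw : IsWeight w) (P : Cube n) : 0 < ⨍ x in P.set, w x := by
  by_contra! h
  refine (measure_le_setAverage_pos P.volume_set_pos.ne' P.volume_set_ne_top
    (hw.integrableOn_cube P)).ne' (measure_mono_null (fun x hx => ?_) (ae_iff.1 hw.2))
  exact not_lt.2 (hx.2.trans h)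

theorem essInf_mem_Icc_of_le_on {X : Type*} [MeasurableSpace X] {μ : Measure X} {f : X → ℝ}
    {a b : ℝ} (hf : ∀ x, a ≤ f x) {T : Set X} (hT : μ T ≠ 0)
    (hb : ∀ x ∈ T, f x ≤ b) :
    essInf f μ ∈ Icc a b := by
  have hfreq : ∃ᶠ x in ae μ, f x ≤ b :=
    frequently_ae_iff.2 fun h => hT (measure_mono_null hb h)
  exact ⟨le_liminf_of_le (.of_frequently_le hfreq) (.of_forall hf),
    liminf_le_of_frequently_le hfreq ⟨a, eventually_map.2 (.of_forall hf)⟩⟩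

theorem A1With.setAverage_le_of_le_on {C : ℝ} (hw0 : ∀ x, 0 ≤ w x) (hA : A1With w C)
    (P : Cube n) {T : Set (EuclideanSpace ℝ (Fin n))} (hTP : T ⊆ P.set) (hT : volume T ≠ 0)
    {b : ℝ} (hb : ∀ x ∈ T, w x ≤ b) :
    ⨍ x in P.set, w x ≤ max C 0 * b := by
  have hTr : volume.restrict P.set T ≠ 0 := fun h =>
    hT (measure_mono_null (inter_eq_left.2 hTP).ge (Measure.measure_inter_eq_zero_of_restrict h))
  obtain ⟨h0, hle⟩ := essInf_mem_Icc_of_le_on hw0 hTr hb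
  calc ⨍ x in P.set, w x ≤ C * essInf w (volume.restrict P.set) := hA P
    _ ≤ max C 0 * essInf w (volume.restrict P.set) := by
      gcongr; exact le_max_left C 0
    _ ≤ max C 0 * b := by gcongr

end Weight

section DistanceWeight

variable {n : ℕ} {E : Set (EuclideanSpace ℝ (Fin n))} {α : ℝ}

theorem distw_nonneg (E : Set (EuclideanSpace ℝ (Fin n))) (α : ℝ)
    (x : EuclideanSpace ℝ (Fin n)) : 0 ≤ distw E α x :=
  Real.rpow_nonneg infDist_nonneg _

theorem nonneg_of_memA1_distw (hne : E.Nonempty) (h : MemA1 (distw E α)) : 0 ≤ α := by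
  by_contra! hα
  obtain ⟨x, hx⟩ := hne
  obtain ⟨hw, C, hA⟩ := h
  let P := Cube.enclosing x one_pos
  have hcont : Continuous (distw E α) :=
    (continuous_infDist_pt E).rpow_const fun _ => Or.inr (by linarith)
  have hsmall : ∀ ε > 0, ⨍ z in P.set, distw E α z ≤ max C 0 * ε := by
    intro ε hε
    refine hA.setAverage_le_of_le_on (distw_nonneg E α) P
      (inter_subset_right.trans (Cube.ball_subset_enclosing x one_pos))
      (((isOpen_Iio.preimage hcont).inter isOpen_ball).measure_ne_zero volume
        ⟨x, ?_, mem_ball_self one_pos⟩) fun z hz => (hz.1 : distw E α z < ε).le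
    simpa [distw, infDist_zero_of_mem hx, Real.zero_rpow (neg_ne_zero.2 hα.ne)] using hε
  have hlim : Tendsto (fun ε => max C 0 * ε) (𝓝[>] 0) (𝓝 0) := by
    simpa using tendsto_nhdsWithin_of_tendsto_nhds
      ((continuous_const_mul (max C 0)).tendsto (0 : ℝ))
  exact (hw.setAverage_pos P).not_ge (ge_of_tendsto hlim (eventually_nhdsWithin_of_forall hsmall))

theorem distw_le_of_ball_subset_compl (hne : E.Nonempty) (hα : 0 ≤ α)
    {y z : EuclideanSpace ℝ (Fin n)} {t : ℝ} (ht : ball y t ⊆ Eᶜ)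
    (hz : z ∈ ball y (t / 2)) : distw E α z ≤ (t / 2) ^ (-α) := by
  have hdist : t / 2 ≤ infDist z E := by
    refine (le_infDist hne).2 fun e he => ?_
    have hey : t ≤ dist e y := not_lt.1 fun h => ht h he
    linarith [dist_triangle e z y, dist_comm z e, mem_ball.1 hz]
  exact Real.rpow_le_rpow_of_nonpos (pos_of_mem_ball hz) hdist (neg_nonpos.2 hα)

theorem rpow_neg_mul_volume_thickening_le_integral (hne : E.Nonempty) (hα : 0 < α)
    (hw : IsWeight (distw E α)) (P : Cube n) (r : ℝ) :
    r ^ (-α) * (volume (thickening r E ∩ P.set)).toReal ≤ ∫ z in P.set, distw E α z := by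
  set T := thickening r E ∩ P.set
  have hT : MeasurableSet T := isOpen_thickening.measurableSet.inter P.measurableSet
  have hTfin : volume T ≠ ⊤ := measure_ne_top_of_subset inter_subset_right P.volume_set_ne_top
  have hbound : ∀ᵐ z ∂volume.restrict T, r ^ (-α) ≤ distw E α z := by
    rw [ae_restrict_iff' hT]
    filter_upwards [hw.2] with z hz hzT
    have hd : 0 < infDist z E := infDist_nonneg.lt_of_ne fun h => by
      simp [distw, ← h, Real.zero_rpow (neg_ne_zero.2 hα.ne')] at hz
    exact Real.rpow_le_rpow_of_nonpos hd ((mem_thickening_iff_infDist_lt hne).1 hzT.1).le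
      (neg_nonpos.2 hα.le)
  calc r ^ (-α) * (volume T).toReal = ∫ _ in T, r ^ (-α) := by
        rw [setIntegral_const, smul_eq_mul, mul_comm]; rfl
    _ ≤ ∫ z in T, distw E α z :=
        integral_mono_ae (integrableOn_const hTfin) ((hw.integrableOn_cube P).mono_set
          inter_subset_right) hbound
    _ ≤ ∫ z in P.set, distw E α z :=
        setIntegral_mono_set (hw.integrableOn_cube P) (.of_forall (distw_nonneg E α))
          inter_subset_right.eventuallyLE

end DistanceWeight

section FreeBalls

variable {n : ℕ} {E : Set (EuclideanSpace ℝ (Fin n))} {x : EuclideanSpace ℝ (Fin n)} {R : ℝ}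

def freeRadii (E : Set (EuclideanSpace ℝ (Fin n))) (x : EuclideanSpace ℝ (Fin n)) (R : ℝ) :
    Set ℝ :=
  {t : ℝ | ∃ y ∈ ball x R, ball y t ⊆ ball x R \ E}

theorem hFree_eq_sSup_freeRadii : hFree E x R = sSup (freeRadii E x R) := rfl

/-- In `ℝ⁰` a ball of positive radius is the whole space, which meets `E`. -/
theorem le_of_mem_freeRadii (hne : E.Nonempty) {t : ℝ} (ht : t ∈ freeRadii E x R) :
    t ≤ R := by
  obtain ⟨y, hy, hsub⟩ := ht
  have hR := pos_of_mem_ball hy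
  rcases le_or_gt t 0 with ht0 | ht0
  · linarith
  obtain ⟨e, he⟩ := hne
  have : Nontrivial (EuclideanSpace ℝ (Fin n)) :=
    ⟨⟨y, e, fun hye => (hsub (mem_ball_self ht0)).2 (hye ▸ he)⟩⟩
  have hdiam := diam_mono (hsub.trans sdiff_subset) isBounded_ball
  rw [diam_ball_eq y ht0.le, diam_ball_eq x hR.le] at hdiam
  linarith

theorem bddAbove_freeRadii (hne : E.Nonempty) : BddAbove (freeRadii E x R) :=
  ⟨R, fun _ => le_of_mem_freeRadii hne⟩

theorem hFree_le (hne : E.Nonempty) (hR : 0 ≤ R) : hFree E x R ≤ R :=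
  Real.sSup_le (fun _ => le_of_mem_freeRadii hne) hR

theorem exists_half_hFree_lt (hpos : 0 < hFree E x R) :
    ∃ y t, hFree E x R / 2 < t ∧ ball y t ⊆ ball x R \ E := by
  have hne : (freeRadii E x R).Nonempty := by
    by_contra! h
    simp [hFree_eq_sSup_freeRadii, h] at hpos
  obtain ⟨t, ⟨y, -, hsub⟩, ht⟩ := exists_lt_of_lt_csSup hne (half_lt_self hpos)
  exact ⟨y, t, ht, hsub⟩

theorem hFree_pos_of_infDist_pos (hne : E.Nonempty) {z : EuclideanSpace ℝ (Fin n)}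
    (hz : z ∈ ball x R) (hd : 0 < infDist z E) : 0 < hFree E x R := by
  have hmem : min (infDist z E) (R - dist z x) ∈ freeRadii E x R :=
    ⟨z, hz, subset_inter
      (ball_subset_ball' (by linarith [min_le_right (infDist z E) (R - dist z x)]))
      ((ball_subset_ball (min_le_left _ _)).trans ball_infDist_subset_compl)⟩
  exact (lt_min hd (sub_pos.2 hz)).trans_le (le_csSup (bddAbove_freeRadii hne) hmem)

theorem hFree_pos_of_isWeight_distw (hne : E.Nonempty) {α : ℝ} (hα : α ≠ 0)
    (hw : IsWeight (distw E α)) (hR : 0 < R) : 0 < hFree E x R := by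
  have : (ae (volume.restrict (ball x R))).NeBot :=
    ae_restrict_neBot.2 (measure_ball_pos volume x hR).ne'
  obtain ⟨z, hz, hwz⟩ :=
    ((ae_restrict_mem (measurableSet_ball (x := x) (ε := R))).and (ae_restrict_of_ae hw.2)).exists
  refine hFree_pos_of_infDist_pos hne hz (infDist_nonneg.lt_of_ne fun h => ?_)
  simp [distw, ← h, Real.zero_rpow (neg_ne_zero.2 hα)] at hwz

end FreeBalls

section MuckenhouptExponent

variable {n : ℕ} {E : Set (EuclideanSpace ℝ (Fin n))} {α : ℝ}

theorem zero_mem_muckSet : (0 : ℝ) ∈ MuckSet E :=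
  ⟨1, fun _ _ _ _ _ _ _ => by
    simpa using ENNReal.toReal_mono measure_ball_lt_top.ne (measure_mono inter_subset_right)⟩

theorem muckExp_nonneg (E : Set (EuclideanSpace ℝ (Fin n))) : 0 ≤ MuckExp E := by
  unfold MuckExp
  split_ifs
  · exact Real.sSup_nonneg' ⟨0, zero_mem_muckSet, le_rfl⟩
  · exact le_rfl

theorem muckSet_subset_Iic {x : EuclideanSpace ℝ (Fin n)} (hx : x ∈ E) {R : ℝ}
    (hpos : 0 < hFree E x R) : MuckSet E ⊆ Iic (n : ℝ) := by
  rintro β ⟨C, hC⟩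
  rw [mem_Iic]
  by_contra! hβ
  obtain ⟨y, t, ht, hsub⟩ := exists_half_hFree_lt hpos
  have hR : 0 < R := pos_of_mem_ball (hsub (mem_ball_self (by linarith))).1
  have hle := hFree_le ⟨x, hx⟩ hR.le (x := x)
  set h₀ := hFree E x R
  set v := (volume (ball (0 : EuclideanSpace ℝ (Fin n)) 1)).toReal
  have hv : 0 < v :=
    ENNReal.toReal_pos (measure_ball_pos volume _ one_pos).ne' measure_ball_lt_top.ne
  have key : ∀ r ∈ Ioo 0 h₀, h₀ ^ β ≤ C * R ^ n * r ^ (β - n) := by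
    rintro r ⟨hr, hrh⟩
    have hball : ball x r ⊆ thickening r E ∩ ball x R := fun z hz =>
      ⟨mem_thickening_iff.2 ⟨x, hx, hz⟩, ball_subset_ball (hrh.le.trans hle) hz⟩
    have hvol := (ENNReal.toReal_mono (measure_ne_top_of_subset inter_subset_right
      measure_ball_lt_top.ne) (measure_mono hball)).trans (hC x hx R r hr hrh hle)
    rw [volume_ball_toReal x hr, volume_ball_toReal x hR] at hvol
    have hsplit : (h₀ / r) ^ (-β) = r ^ n * r ^ (β - n) / h₀ ^ β := by
      rw [← Real.rpow_natCast, ← Real.rpow_add hr, add_sub_cancel,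
        Real.rpow_neg (by positivity), Real.div_rpow hpos.le hr.le, inv_div]
    rw [hsplit] at hvol
    have hrv : 0 < r ^ n * v := by positivity
    refine le_of_mul_le_mul_left ?_ hrv
    calc r ^ n * v * h₀ ^ β
        ≤ C * (r ^ n * r ^ (β - n) / h₀ ^ β) * (R ^ n * v) * h₀ ^ β := by gcongr
      _ = r ^ n * v * (C * R ^ n * r ^ (β - n)) := by field_simp
  have hlim : Tendsto (fun r : ℝ => C * R ^ n * r ^ (β - n)) (𝓝[>] 0) (𝓝 0) := by
    have := (Real.continuousAt_rpow_const 0 (β - n) (Or.inr (by linarith))).tendsto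
    simpa [Real.zero_rpow (by linarith : β - n ≠ 0)] using
      tendsto_nhdsWithin_of_tendsto_nhds (this.const_mul (C * R ^ n))
  exact (Real.rpow_pos_of_pos hpos β).not_ge
    (ge_of_tendsto hlim (eventually_of_mem (Ioo_mem_nhdsGT hpos) key))

theorem mem_muckSet_of_memA1_distw (hne : E.Nonempty) (hα : 0 < α) (h : MemA1 (distw E α)) :
    α ∈ MuckSet E := by
  obtain ⟨hw, C, hA⟩ := h
  refine ⟨max C 0 * 4 ^ α * 2 ^ n / (volume (ball (0 : EuclideanSpace ℝ (Fin n)) 1)).toReal,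
    fun x hx R r hr hrh hhR => ?_⟩
  set h₀ := hFree E x R
  have hh₀ : 0 < h₀ := hr.trans hrh
  have hR : 0 < R := hh₀.trans_le hhR
  obtain ⟨y, t, ht, hsub⟩ := exists_half_hFree_lt hh₀
  let Q := Cube.enclosing x hR
  have hBQ : ball x R ⊆ Q.set := Cube.ball_subset_enclosing x hR
  have havg : ⨍ z in Q.set, distw E α z ≤ max C 0 * (h₀ / 4) ^ (-α) := by
    refine hA.setAverage_le_of_le_on (distw_nonneg E α) Q (T := ball y (t / 2))
      ((ball_subset_ball (by linarith)).trans (hsub.trans (sdiff_subset.trans hBQ)))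
      (measure_ball_pos volume y (by linarith)).ne' fun z hz => ?_
    exact (distw_le_of_ball_subset_compl hne hα.le (hsub.trans fun _ hu => hu.2) hz).trans
      (Real.rpow_le_rpow_of_nonpos (by linarith) (by linarith) (neg_nonpos.2 hα.le))
  have hint : r ^ (-α) * (volume (thickening r E ∩ Q.set)).toReal ≤
      (volume Q.set).toReal * (max C 0 * (h₀ / 4) ^ (-α)) := by
    refine (rpow_neg_mul_volume_thickening_le_integral hne hα hw Q r).trans ?_
    rw [← measure_smul_setAverage _ Q.volume_set_ne_top, smul_eq_mul]
    exact mul_le_mul_of_nonneg_left havg ENNReal.toReal_nonneg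
  calc (volume (thickening r E ∩ ball x R)).toReal
      ≤ (volume (thickening r E ∩ Q.set)).toReal :=
        ENNReal.toReal_mono (measure_ne_top_of_subset inter_subset_right Q.volume_set_ne_top)
          (measure_mono (inter_subset_inter_right _ hBQ))
    _ = r ^ α * (r ^ (-α) * (volume (thickening r E ∩ Q.set)).toReal) := by
        rw [← mul_assoc, ← Real.rpow_add hr, add_neg_cancel, Real.rpow_zero, one_mul]
    _ ≤ r ^ α * ((volume Q.set).toReal * (max C 0 * (h₀ / 4) ^ (-α))) := by gcongr
    _ = _ := by
        rw [volume_enclosing_toReal, Real.rpow_neg (by positivity), Real.rpow_neg (by positivity),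
          Real.div_rpow hh₀.le (by norm_num), Real.div_rpow hh₀.le hr.le]
        field_simp

end MuckenhouptExponent

/-- If `dist(·,E)^{-α} ∈ A₁` then `0 ≤ α ≤ Mu(E)`. -/
theorem a1_exponent_le_muckExp {n : ℕ} (E : Set (EuclideanSpace ℝ (Fin n)))
    (hne : E.Nonempty) (α : ℝ) (h : MemA1 (distw E α)) :
    0 ≤ α ∧ α ≤ MuckExp E := by
  have hα := nonneg_of_memA1_distw hne h
  refine ⟨hα, ?_⟩
  rcases hα.eq_or_lt with rfl | hα
  · exact muckExp_nonneg E
  obtain ⟨x, hx⟩ := hne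
  have hpos : ∀ y ∈ E, ∀ R : ℝ, 0 < R → 0 < hFree E y R := fun _ _ _ hR =>
    hFree_pos_of_isWeight_distw ⟨x, hx⟩ hα.ne' h.1 hR
  rw [MuckExp, if_pos hpos]
  exact le_csSup ⟨n, muckSet_subset_Iic hx (hpos x hx 1 one_pos)⟩
    (mem_muckSet_of_memA1_distw ⟨x, hx⟩ hα h)
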